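/- arXiv:math/0307213 — 4 statements merged into one kernel-verified Lean document; each statement's English description precedes it below -/
import Mathlib

section
/- For every nonnegative integer j, the number of 3×3 nonnegative integer matrices with all row and column sums equal to j satisfies H_3(j) = C(j+2,4) + C(j+3,4) + C(j+4,4), where C(n,k) denotes the binomial coefficient. -/
/-!
A `3 × 3` magic square is determined by its first two rows `r, s`, each a composition of `j` into
three parts, subject to `r l + s l ≤ j` for every column `l`. There are `C(j+2,2)²` pairs of rows.
Since `∑ l, (r l + s l) = 2 j`, at most one column can violate its bound, and deleting a violating
column leaves four entries with sum `< j`, from which the deleted column is recovered; so each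
column accounts for `C(j+3,4)` violations. The theorem then reduces to the identity
`C(j+2,2)² - 3 C(j+3,4) = C(j+2,4) + C(j+3,4) + C(j+4,4)`.
-/

/-- `H k j`: the number of `k × k` matrices with nonnegative integer entries
such that every row sum and every column sum equals `j`. -/
noncomputable def H (k j : ℕ) : ℕ :=
  Nat.card {A : Matrix (Fin k) (Fin k) ℕ //
    (∀ i, ∑ j', A i j' = j) ∧ (∀ j', ∑ i, A i j' = j)}

open Finset

theorem natCard_sum_le_eq_choose (ι : Type*) [Fintype ι] (m : ℕ) :
    Nat.card {f : ι → ℕ // ∑ i, f i ≤ m} = (Fintype.card ι + m).choose m := by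
  classical
  -- the slack `m - ∑ i, f i` becomes an extra coordinate
  let e : {f : ι → ℕ // ∑ i, f i ≤ m} ≃ {g : Option ι → ℕ // ∑ i, g i = m} :=
    { toFun f := ⟨fun o => o.elim (m - ∑ i, f.1 i) f.1, by
        simpa [Fintype.sum_option] using Nat.sub_add_cancel f.2⟩
      invFun g := ⟨fun i => g.1 (some i), by simp [← g.2, Fintype.sum_option]⟩
      left_inv _ := rfl
      right_inv g := by
        ext (_ | i)
        · simp [← g.2, Fintype.sum_option]
        · rfl }
  rw [Nat.card_congr (e.trans (Sym.equivNatSumOfFintype _ m).symm), Sym.natCard_sym_eq_choose]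
  simp

theorem natCard_sum_lt_eq_choose (ι : Type*) [Fintype ι] [Nonempty ι] (m : ℕ) :
    Nat.card {f : ι → ℕ // ∑ i, f i < m} = (Fintype.card ι + m - 1).choose (Fintype.card ι) := by
  cases m with
  | zero =>
    simp [Nat.choose_eq_zero_of_lt (Nat.sub_lt Fintype.card_pos one_pos)]
  | succ m =>
    simp_rw [Nat.lt_succ_iff, natCard_sum_le_eq_choose, Nat.add_succ_sub_one,
      Nat.choose_symm_add]

theorem card_antidiagonalTuple (k n : ℕ) :
    #(Finset.Nat.antidiagonalTuple k n) = (k + n - 1).choose n := by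
  rw [← Nat.card_eq_finsetCard, Nat.card_congr <|
    (Equiv.subtypeEquivRight fun _ => Finset.Nat.mem_antidiagonalTuple).trans
      (Sym.equivNatSumOfFintype (Fin k) n).symm, Sym.natCard_sym_eq_choose, Nat.card_fin]

theorem H_succ_eq_natCard (k j : ℕ) :
    H (k + 1) j = Nat.card {R : Fin k → Fin (k + 1) → ℕ //
      (∀ i, ∑ l, R i l = j) ∧ ∀ l, ∑ i, R i l ≤ j} := by
  refine Nat.card_congr
    { toFun A := ⟨Fin.init A.1, fun i => A.2.1 _, fun l => ?_⟩
      invFun R := ⟨Fin.snoc R.1 fun l => j - ∑ i, R.1 i l, fun i => ?_, fun l => ?_⟩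
      left_inv A := ?_
      right_inv R := Subtype.ext (Fin.init_snoc (α := fun _ => Fin (k + 1) → ℕ) _ _) }
  · have := A.2.2 l
    rw [Fin.sum_univ_castSucc] at this
    exact Nat.le.intro this
  · induction i using Fin.lastCases with
    | cast i => simpa using R.2.1 i
    | last =>
      rw [Fin.snoc_last, sum_tsub_distrib _ fun l _ => R.2.2 l, sum_comm]
      simp [R.2.1, add_mul]
  · simp [Fin.sum_univ_castSucc, Nat.add_sub_cancel' (R.2.2 l)]
  · ext i l
    induction i using Fin.lastCases with
    | cast i => simp [Fin.init]
    | last =>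
      have := A.2.2 l
      rw [Fin.sum_univ_castSucc] at this
      simp [Fin.init]
      omega

def rowSumFinset (m n j : ℕ) : Finset (Fin m → Fin n → ℕ) :=
  Fintype.piFinset fun _ => Finset.Nat.antidiagonalTuple n j

@[simp]
theorem mem_rowSumFinset {m n j : ℕ} {R : Fin m → Fin n → ℕ} :
    R ∈ rowSumFinset m n j ↔ ∀ i, ∑ l, R i l = j := by
  simp [rowSumFinset, Finset.Nat.mem_antidiagonalTuple]

theorem card_rowSumFinset (m n j : ℕ) :
    #(rowSumFinset m n j) = (n + j - 1).choose j ^ m := by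
  simp [rowSumFinset, card_antidiagonalTuple]

theorem natCard_eq_card_filter_rowSumFinset {m n j : ℕ} (p : (Fin m → Fin n → ℕ) → Prop)
    [DecidablePred p] :
    Nat.card {R : Fin m → Fin n → ℕ // (∀ i, ∑ l, R i l = j) ∧ p R} =
      #{R ∈ rowSumFinset m n j | p R} := by
  rw [← Nat.card_eq_finsetCard]
  exact Nat.card_congr (Equiv.subtypeEquivRight fun _ => by simp)

/-- Two rows summing to `j` have total `2 j`, so at most one column sum exceeds `j`. -/
theorem card_rowSumFinset_two_eq_add_sum (n j : ℕ) :
    #(rowSumFinset 2 n j) = #{R ∈ rowSumFinset 2 n j | ∀ l, ∑ i, R i l ≤ j} +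
      ∑ l, #{R ∈ rowSumFinset 2 n j | j < ∑ i, R i l} := by
  rw [← card_filter_add_card_filter_not (fun R => ∀ l, ∑ i, R i l ≤ j), ← card_biUnion]
  · congr 2
    ext R
    simp
  · intro l _ l' _ hne
    rw [Function.onFun, disjoint_filter]
    intro R hR hl hl'
    have htotal : ∑ l, ∑ i, R i l = 2 * j := by
      rw [sum_comm]
      simp [mem_rowSumFinset.1 hR, two_mul]
    have := sum_le_sum_of_subset (f := fun l => ∑ i, R i l) (subset_univ {l, l'})
    rw [sum_pair hne] at this
    omega

/-- The row sums recover the deleted column. -/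
def deleteColumnEquiv (n j : ℕ) (l : Fin (n + 1)) :
    {R : Fin 2 → Fin (n + 1) → ℕ // (∀ i, ∑ c, R i c = j) ∧ j < ∑ i, R i l} ≃
      {S : Fin 2 → Fin n → ℕ // ∑ i, ∑ c, S i c < j} where
  toFun R := ⟨fun i => l.removeNth (R.1 i), by
    have h0 := R.2.1 0
    have h1 := R.2.1 1
    have hl := R.2.2
    rw [← Fin.add_sum_removeNth l] at h0 h1
    simp only [Fin.sum_univ_two] at hl ⊢
    omega⟩
  invFun S := ⟨fun i => l.insertNth (j - ∑ c, S.1 i c) (S.1 i), fun i => by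
    have := S.2
    rw [Fin.sum_univ_two] at this
    rw [Fin.sum_insertNth]
    fin_cases i <;> simp <;> omega, by
    have := S.2
    rw [Fin.sum_univ_two] at this ⊢
    simp only [Fin.insertNth_apply_same]
    omega⟩
  left_inv R := by
    ext i : 2
    refine Fin.insertNth_eq_iff.2 ⟨?_, rfl⟩
    have := R.2.1 i
    rw [← Fin.add_sum_removeNth l] at this
    exact Nat.sub_eq_of_eq_add this.symm
  right_inv S := by
    ext i : 2
    exact Fin.removeNth_insertNth (α := fun _ => ℕ) _ _ _

theorem card_rowSumFinset_two_three_filter_lt (j : ℕ) (l : Fin 3) :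
    #{R ∈ rowSumFinset 2 3 j | j < ∑ i, R i l} = (j + 3).choose 4 := by
  have uncurry : {f : Fin 2 × Fin 2 → ℕ // ∑ p, f p < j} ≃
      {S : Fin 2 → Fin 2 → ℕ // ∑ i, ∑ c, S i c < j} :=
    (Equiv.curry _ _ _).subtypeEquiv fun f => by rw [Fintype.sum_prod_type]; rfl
  rw [← natCard_eq_card_filter_rowSumFinset, Nat.card_congr (deleteColumnEquiv 2 j l),
    ← Nat.card_congr uncurry, natCard_sum_lt_eq_choose]
  simp [add_comm]

theorem choose_two_sq (j : ℕ) :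
    (j + 2).choose 2 ^ 2 = (j + 2).choose 4 + 4 * (j + 3).choose 4 + (j + 4).choose 4 := by
  apply Nat.cast_injective (R := ℚ)
  push_cast
  simp only [Nat.cast_choose_eq_descPochhammer_div, descPochhammer_succ_eval, descPochhammer_zero,
    Polynomial.eval_one]
  push_cast
  ring

theorem H_three (j : ℕ) :
    H 3 j = Nat.choose (j + 2) 4 + Nat.choose (j + 3) 4 + Nat.choose (j + 4) 4 := by
  have hH : H 3 j = #{R ∈ rowSumFinset 2 3 j | ∀ l, ∑ i, R i l ≤ j} :=
    (H_succ_eq_natCard 2 j).trans (natCard_eq_card_filter_rowSumFinset _)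
  have hrows : (3 + j - 1).choose j = (j + 2).choose 2 := by
    rw [show 3 + j - 1 = j + 2 by omega, Nat.choose_symm_add]
  have hsplit := card_rowSumFinset_two_eq_add_sum 3 j
  simp only [card_rowSumFinset, hrows, choose_two_sq, card_rowSumFinset_two_three_filter_lt,
    sum_const, card_univ, Fintype.card_fin, smul_eq_mul] at hsplit
  omega
end

section
/- For every nonnegative integer j, H_3(j) = (1/8)j^4 + (3/4)j^3 + (15/8)j^2 + (9/4)j + 1; equivalently, 8·H_3(j) = j^4 + 6j^3 + 15j^2 + 18j + 8. -/
open Finset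

section Compositions

variable {ι : Type*} [Fintype ι]

instance (n : ℕ) : Finite {x : ι → ℕ // ∑ i, x i = n} := by
  classical exact .of_equiv _ (Sym.equivNatSumOfFintype ι n)

theorem card_sum_eq_multichoose (n : ℕ) :
    Nat.card {x : ι → ℕ // ∑ i, x i = n} = (Fintype.card ι).multichoose n := by
  classical
  rw [← Nat.card_congr (Sym.equivNatSumOfFintype ι n), Nat.card_eq_fintype_card,
    Sym.card_sym_eq_multichoose]

theorem card_sum_eq_add_sum_and_le (c : ι → ℕ) (m : ℕ) :
    Nat.card {x : ι → ℕ // ∑ i, x i = m + ∑ i, c i ∧ c ≤ x} =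
      Nat.card {x : ι → ℕ // ∑ i, x i = m} := by
  refine Nat.card_congr
    { toFun x := ⟨x.1 - c, ?_⟩
      invFun y := ⟨y.1 + c, ?_, le_add_self⟩
      left_inv x := Subtype.ext (tsub_add_cancel_of_le x.2.2)
      right_inv y := Subtype.ext (add_tsub_cancel_right y.1 c) }
  · simp only [Pi.sub_apply]
    rw [sum_tsub_distrib _ fun i _ => x.2.2 i, x.2.1, add_tsub_cancel_right]
  · simp only [Pi.add_apply, sum_add_distrib, y.2]

theorem card_sum_eq_and_le_of_lt {c : ι → ℕ} {n : ℕ} (hn : n < ∑ i, c i) :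
    Nat.card {x : ι → ℕ // ∑ i, x i = n ∧ c ≤ x} = 0 := by
  refine Nat.card_eq_zero.2 (.inl ⟨fun ⟨x, hsum, hle⟩ => ?_⟩)
  have := sum_le_sum fun i (_ : i ∈ univ) => hle i
  omega

end Compositions

theorem Nat.multichoose_succ_eq_choose (k n : ℕ) :
    (k + 1).multichoose n = (n + k).choose k := by
  rw [Nat.multichoose_eq, show k + 1 + n - 1 = n + k by omega, Nat.choose_symm_add]

theorem Nat.card_subtype_and_add_card_subtype_and_not {α : Type*} (p q : α → Prop)
    [Finite {x // p x}] :
    Nat.card {x // p x ∧ q x} + Nat.card {x // p x ∧ ¬ q x} = Nat.card {x // p x} := by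
  classical
  rw [← Nat.card_congr (Equiv.subtypeSubtypeEquivSubtypeInter p q),
    ← Nat.card_congr (Equiv.subtypeSubtypeEquivSubtypeInter p (¬ q ·)), ← Nat.card_sum]
  exact Nat.card_congr (Equiv.sumCompl fun x : {x // p x} => q x.1)

section ShiftReflect

variable {G : Type*} [AddCommGroup G]

/-- For `G = Fin 3` the shifts `k = i + s` are the even permutations and the reflections
`i + k = t` the odd ones, so these are the nonnegative combinations of permutation matrices. -/
def shiftReflectCombination (x : G ⊕ G → ℕ) : Matrix G G ℕ :=
  Matrix.of fun i k => x (.inl (k - i)) + x (.inr (i + k))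

variable [Fintype G]

theorem sum_shiftReflectCombination_row (x : G ⊕ G → ℕ) (i : G) :
    ∑ k, shiftReflectCombination x i k = ∑ t, x t := by
  simp only [shiftReflectCombination, Matrix.of_apply, sum_add_distrib, Fintype.sum_sum_type]
  exact congr_arg₂ (· + ·) (Equiv.sum_comp (Equiv.subRight i) fun s => x (.inl s))
    (Equiv.sum_comp (Equiv.addLeft i) fun t => x (.inr t))

theorem sum_shiftReflectCombination_col (x : G ⊕ G → ℕ) (k : G) :
    ∑ i, shiftReflectCombination x i k = ∑ t, x t := by
  simp only [shiftReflectCombination, Matrix.of_apply, sum_add_distrib, Fintype.sum_sum_type]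
  exact congr_arg₂ (· + ·) (Equiv.sum_comp (Equiv.subLeft k) fun s => x (.inl s))
    (Equiv.sum_comp (Equiv.addRight k) fun t => x (.inr t))

end ShiftReflect

/-- Normalising the smallest odd coefficient to `0`, the diagonal entry at `(2t, 2t)` is
`x (inl 0) + x (inr t)` with `x (inl 0) = d`, and row `0` gives `A 0 s = x (inl s) + x (inr s)`. -/
def shiftReflectCoeffs (A : Matrix (Fin 3) (Fin 3) ℕ) : Fin 3 ⊕ Fin 3 → ℕ :=
  let d := min (A 0 0) (min (A 1 1) (A 2 2))
  Sum.elim (fun s => A 0 s + d - A (2 * s) (2 * s)) (fun t => A (2 * t) (2 * t) - d)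

section Magic

variable {A : Matrix (Fin 3) (Fin 3) ℕ} {j : ℕ}

theorem sum_shiftReflectCoeffs (hrow : ∀ i, ∑ k, A i k = j) (hcol : ∀ k, ∑ i, A i k = j) :
    ∑ t, shiftReflectCoeffs A t = j := by
  simp only [Fin.forall_fin_succ, Fin.sum_univ_three, Fin.succ_zero_eq_one, Fin.succ_one_eq_two,
    IsEmpty.forall_iff, and_true] at hrow hcol
  simp only [Fin.sum_univ_three, Fintype.sum_sum_type, shiftReflectCoeffs, Sum.elim_inl,
    Sum.elim_inr, Fin.reduceMul, Fin.isValue]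
  omega

theorem exists_shiftReflectCoeffs_inr_eq_zero (A : Matrix (Fin 3) (Fin 3) ℕ) :
    ∃ t, shiftReflectCoeffs A (.inr t) = 0 := by
  simp only [Fin.exists_fin_succ, Fin.exists_fin_zero, Fin.succ_zero_eq_one, Fin.succ_one_eq_two,
    shiftReflectCoeffs, Sum.elim_inr, Fin.reduceMul, Fin.isValue]
  omega

theorem shiftReflectCombination_shiftReflectCoeffs (hrow : ∀ i, ∑ k, A i k = j)
    (hcol : ∀ k, ∑ i, A i k = j) : shiftReflectCombination (shiftReflectCoeffs A) = A := by
  simp only [Fin.forall_fin_succ, Fin.sum_univ_three, Fin.succ_zero_eq_one, Fin.succ_one_eq_two,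
    IsEmpty.forall_iff, and_true] at hrow hcol
  ext i k
  fin_cases i <;> fin_cases k <;>
    simp only [shiftReflectCombination, shiftReflectCoeffs, Matrix.of_apply, Sum.elim_inl,
      Sum.elim_inr, Fin.reduceSub, Fin.reduceAdd, Fin.reduceMul, Fin.reduceFinMk, Fin.isValue] <;>
    omega

end Magic

theorem shiftReflectCoeffs_shiftReflectCombination {x : Fin 3 ⊕ Fin 3 → ℕ}
    (hx : ∃ t, x (.inr t) = 0) : shiftReflectCoeffs (shiftReflectCombination x) = x := by
  obtain ⟨t, ht⟩ := hx
  ext s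
  fin_cases t <;> rcases s with s | s <;> fin_cases s <;>
    simp only [Fin.reduceFinMk, Fin.isValue] at ht <;>
    simp only [shiftReflectCombination, shiftReflectCoeffs, Matrix.of_apply, Sum.elim_inl,
      Sum.elim_inr, Fin.reduceSub, Fin.reduceAdd, Fin.reduceMul, Fin.reduceFinMk, Fin.isValue] <;>
    omega

def magicEquivShiftReflectCoeffs (j : ℕ) :
    {A : Matrix (Fin 3) (Fin 3) ℕ // (∀ i, ∑ k, A i k = j) ∧ ∀ k, ∑ i, A i k = j} ≃
      {x : Fin 3 ⊕ Fin 3 → ℕ // ∑ t, x t = j ∧ ∃ t, x (.inr t) = 0} where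
  toFun A := ⟨shiftReflectCoeffs A, sum_shiftReflectCoeffs A.2.1 A.2.2,
    exists_shiftReflectCoeffs_inr_eq_zero A⟩
  invFun x := ⟨shiftReflectCombination x,
    fun i => (sum_shiftReflectCombination_row x.1 i).trans x.2.1,
    fun k => (sum_shiftReflectCombination_col x.1 k).trans x.2.1⟩
  left_inv A := Subtype.ext (shiftReflectCombination_shiftReflectCoeffs A.2.1 A.2.2)
  right_inv x := Subtype.ext (shiftReflectCoeffs_shiftReflectCombination x.2.2)

theorem card_shiftReflectCoeffs (j : ℕ) :
    Nat.card {x : Fin 3 ⊕ Fin 3 → ℕ // ∑ t, x t = j} = (j + 5).choose 5 := by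
  rw [card_sum_eq_multichoose, Fintype.card_sum, Fintype.card_fin]
  exact Nat.multichoose_succ_eq_choose 5 j

theorem card_shiftReflectCoeffs_inr_ne_zero (j : ℕ) :
    Nat.card {x : Fin 3 ⊕ Fin 3 → ℕ // ∑ t, x t = j ∧ ¬ ∃ t, x (.inr t) = 0} =
      (j + 2).choose 5 := by
  set c : Fin 3 ⊕ Fin 3 → ℕ := Sum.elim 0 1
  have hc : ∑ t, c t = 3 := by simp [c]
  have hpos (x : Fin 3 ⊕ Fin 3 → ℕ) : (¬ ∃ t, x (.inr t) = 0) ↔ c ≤ x := by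
    simp [c, Pi.le_def, Nat.one_le_iff_ne_zero]
  rw [Nat.card_congr (Equiv.subtypeEquivRight fun x => and_congr_right' (hpos x))]
  rcases lt_or_ge j 3 with hj | hj
  · rw [card_sum_eq_and_le_of_lt (by omega), Nat.choose_eq_zero_of_lt (by omega)]
  · obtain ⟨m, rfl⟩ := Nat.exists_eq_add_of_le' hj
    have hshift := card_sum_eq_add_sum_and_le c m
    rw [hc] at hshift
    rw [hshift, card_shiftReflectCoeffs]

theorem H_three_add_choose (j : ℕ) : H 3 j + (j + 2).choose 5 = (j + 5).choose 5 := by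
  rw [H, Nat.card_congr (magicEquivShiftReflectCoeffs j), ← card_shiftReflectCoeffs_inr_ne_zero,
    ← card_shiftReflectCoeffs]
  exact Nat.card_subtype_and_add_card_subtype_and_not _ _

theorem H_three_poly (j : ℕ) :
    8 * H 3 j = j ^ 4 + 6 * j ^ 3 + 15 * j ^ 2 + 18 * j + 8 := by
  have h := congrArg (Nat.cast : ℕ → ℚ) (H_three_add_choose j)
  simp only [Nat.cast_add, Nat.cast_choose_eq_descPochhammer_div, descPochhammer_succ_eval,
    descPochhammer_zero, Polynomial.eval_one] at h
  have : (8 * H 3 j : ℚ) = j ^ 4 + 6 * j ^ 3 + 15 * j ^ 2 + 18 * j + 8 := by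
    push_cast at h
    linear_combination 8 * h
  exact_mod_cast this
end

section
/- The ordinary generating function of H_3 is (1 + x + x^2)/(1-x)^5, i.e. the formal power series identity Σ_{j≥0} H_3(j) x^j · (1-x)^5 = 1 + x + x^2 holds. -/
set_option maxHeartbeats 1000000


section Helpers
variable {α : Type*} (a b c d e f : α)
lemma v6_0 : ![a,b,c,d,e,f] 0 = a := rfl
lemma v6_1 : ![a,b,c,d,e,f] 1 = b := rfl
lemma v6_2 : ![a,b,c,d,e,f] 2 = c := rfl
lemma v6_3 : ![a,b,c,d,e,f] 3 = d := rfl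
lemma v6_4 : ![a,b,c,d,e,f] 4 = e := rfl
lemma v6_5 : ![a,b,c,d,e,f] 5 = f := rfl
lemma m6_0 {h : 0 < 6} : (⟨0, h⟩ : Fin 6) = 0 := rfl
lemma m6_1 {h : 1 < 6} : (⟨1, h⟩ : Fin 6) = 1 := rfl
lemma m6_2 {h : 2 < 6} : (⟨2, h⟩ : Fin 6) = 2 := rfl
lemma m6_3 {h : 3 < 6} : (⟨3, h⟩ : Fin 6) = 3 := rfl
lemma m6_4 {h : 4 < 6} : (⟨4, h⟩ : Fin 6) = 4 := rfl
lemma m6_5 {h : 5 < 6} : (⟨5, h⟩ : Fin 6) = 5 := rfl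
lemma m3_0 {h : 0 < 3} : (⟨0, h⟩ : Fin 3) = 0 := rfl
lemma m3_1 {h : 1 < 3} : (⟨1, h⟩ : Fin 3) = 1 := rfl
lemma m3_2 {h : 2 < 3} : (⟨2, h⟩ : Fin 3) = 2 := rfl
end Helpers

/-- The matrix `x·I + y·R + z·R² + u·T₀ + v·T₁ + w·T₂` built from a sextuple. -/
def matOf (f : Fin 6 → ℕ) : Matrix (Fin 3) (Fin 3) ℕ :=
  Matrix.of ![![f 0 + f 3, f 1 + f 5, f 2 + f 4],
              ![f 2 + f 5, f 0 + f 4, f 1 + f 3],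
              ![f 1 + f 4, f 2 + f 3, f 0 + f 5]]

section matOfApply
variable (f : Fin 6 → ℕ)
lemma matOf_00 : matOf f 0 0 = f 0 + f 3 := rfl
lemma matOf_01 : matOf f 0 1 = f 1 + f 5 := rfl
lemma matOf_02 : matOf f 0 2 = f 2 + f 4 := rfl
lemma matOf_10 : matOf f 1 0 = f 2 + f 5 := rfl
lemma matOf_11 : matOf f 1 1 = f 0 + f 4 := rfl
lemma matOf_12 : matOf f 1 2 = f 1 + f 3 := rfl
lemma matOf_20 : matOf f 2 0 = f 1 + f 4 := rfl
lemma matOf_21 : matOf f 2 1 = f 2 + f 3 := rfl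
lemma matOf_22 : matOf f 2 2 = f 0 + f 5 := rfl
end matOfApply

/-- The sextuple of coefficients extracted from a magic square. -/
def tupOf (A : Matrix (Fin 3) (Fin 3) ℕ) : Fin 6 → ℕ :=
  ![max (A 2 2 - A 0 1) (A 2 2 - A 1 0),
    max (A 2 2 - A 0 1) (A 2 2 - A 1 0) + A 0 1 - A 2 2,
    max (A 2 2 - A 0 1) (A 2 2 - A 1 0) + A 1 0 - A 2 2,
    A 0 0 - max (A 2 2 - A 0 1) (A 2 2 - A 1 0),
    A 1 1 - max (A 2 2 - A 0 1) (A 2 2 - A 1 0),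
    A 2 2 - max (A 2 2 - A 0 1) (A 2 2 - A 1 0)]

def magicEquiv (j : ℕ) :
    {A : Matrix (Fin 3) (Fin 3) ℕ //
      (∀ i, ∑ j', A i j' = j) ∧ (∀ j', ∑ i, A i j' = j)} ≃
    {f : Fin 6 → ℕ // ∑ i, f i = j ∧ (f 0 = 0 ∨ f 1 = 0 ∨ f 2 = 0)} where
  toFun A := ⟨tupOf A.1, by
    obtain ⟨A, hr, hc⟩ := A
    have r0 := hr 0; have r1 := hr 1; have r2 := hr 2
    have c0 := hc 0; have c1 := hc 1; have c2 := hc 2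
    simp only [Fin.sum_univ_three] at r0 r1 r2 c0 c1 c2
    constructor
    · simp only [Fin.sum_univ_six, tupOf, v6_0, v6_1, v6_2, v6_3, v6_4, v6_5]
      omega
    · simp only [tupOf, v6_0, v6_1, v6_2]
      omega⟩
  invFun f := ⟨matOf f.1, by
    obtain ⟨f, hs, hp⟩ := f
    simp only [Fin.sum_univ_six] at hs
    constructor
    · intro i
      fin_cases i <;>
        simp only [Fin.sum_univ_three, m3_0, m3_1, m3_2,
          matOf_00, matOf_01, matOf_02, matOf_10, matOf_11, matOf_12,
          matOf_20, matOf_21, matOf_22] <;> omega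
    · intro i
      fin_cases i <;>
        simp only [Fin.sum_univ_three, m3_0, m3_1, m3_2,
          matOf_00, matOf_01, matOf_02, matOf_10, matOf_11, matOf_12,
          matOf_20, matOf_21, matOf_22] <;> omega⟩
  left_inv A := by
    obtain ⟨A, hr, hc⟩ := A
    have r0 := hr 0; have r1 := hr 1; have r2 := hr 2
    have c0 := hc 0; have c1 := hc 1; have c2 := hc 2
    simp only [Fin.sum_univ_three] at r0 r1 r2 c0 c1 c2
    apply Subtype.ext
    show matOf (tupOf A) = A
    apply Matrix.ext
    intro i j'
    fin_cases i <;> fin_cases j' <;>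
      simp only [m3_0, m3_1, m3_2,
        matOf_00, matOf_01, matOf_02, matOf_10, matOf_11, matOf_12,
        matOf_20, matOf_21, matOf_22, tupOf, v6_0, v6_1, v6_2, v6_3, v6_4, v6_5] <;>
      omega
  right_inv f := by
    obtain ⟨f, hs, hp⟩ := f
    apply Subtype.ext
    show tupOf (matOf f) = f
    funext i
    fin_cases i <;>
      simp only [m6_0, m6_1, m6_2, m6_3, m6_4, m6_5, tupOf,
        v6_0, v6_1, v6_2, v6_3, v6_4, v6_5,
        matOf_00, matOf_01, matOf_02, matOf_10, matOf_11, matOf_12,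
        matOf_20, matOf_21, matOf_22] <;>
      omega


noncomputable def e1 (k n : ℕ) :
    {f : Fin k → ℕ // ∑ i, f i = n} ≃ {g : Fin k →₀ ℕ // (g.sum fun _ m => m) = n} :=
  Finsupp.equivFunOnFinite.symm.subtypeEquiv (fun f => by
    rw [Finsupp.sum_fintype _ _ (fun _ => rfl)]
    simp)

noncomputable def e2 (k n : ℕ) :
    {g : Fin k →₀ ℕ // (g.sum fun _ m => m) = n} ≃ {s : Multiset (Fin k) // Multiset.card s = n} :=
  Multiset.toFinsupp.toEquiv.symm.subtypeEquiv (fun g => by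
    simp [Finsupp.card_toMultiset, Finsupp.sum])

noncomputable def sumTupleEquivSym (k n : ℕ) :
    {f : Fin k → ℕ // ∑ i, f i = n} ≃ Sym (Fin k) n :=
  (e1 k n).trans (e2 k n)

lemma card_tuple (n : ℕ) : Nat.card {f : Fin 6 → ℕ // ∑ i, f i = n} = (n + 5).choose 5 := by
  rw [Nat.card_congr (sumTupleEquivSym 6 n), Nat.card_eq_fintype_card,
    Sym.card_sym_eq_choose]
  rw [show Fintype.card (Fin 6) + n - 1 = n + 5 by simp only [Fintype.card_fin]; omega]
  exact Nat.choose_symm_of_eq_add (by omega)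

instance instFiniteTuple (n : ℕ) : Finite {f : Fin 6 → ℕ // ∑ i, f i = n} :=
  Finite.of_equiv _ (sumTupleEquivSym 6 n).symm

def shiftEquiv (j : ℕ) :
    {f : Fin 6 → ℕ // ∑ i, f i = j ∧ ¬(f 0 = 0 ∨ f 1 = 0 ∨ f 2 = 0)} ≃
      {g : Fin 6 → ℕ // (∑ i, g i) + 3 = j} where
  toFun f := ⟨![f.1 0 - 1, f.1 1 - 1, f.1 2 - 1, f.1 3, f.1 4, f.1 5], by
    obtain ⟨f, hs, hp⟩ := f
    push_neg at hp
    simp only [Fin.sum_univ_six, v6_0, v6_1, v6_2, v6_3, v6_4, v6_5] at hs ⊢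
    omega⟩
  invFun g := ⟨![g.1 0 + 1, g.1 1 + 1, g.1 2 + 1, g.1 3, g.1 4, g.1 5], by
    obtain ⟨g, hs⟩ := g
    simp only [Fin.sum_univ_six, v6_0, v6_1, v6_2, v6_3, v6_4, v6_5] at hs ⊢
    omega⟩
  left_inv f := by
    obtain ⟨f, hs, hp⟩ := f
    push_neg at hp
    apply Subtype.ext
    funext i
    fin_cases i <;>
      simp only [m6_0, m6_1, m6_2, m6_3, m6_4, m6_5, v6_0, v6_1, v6_2, v6_3, v6_4, v6_5] <;>
      omega
  right_inv g := by
    obtain ⟨g, hs⟩ := g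
    apply Subtype.ext
    funext i
    fin_cases i <;>
      simp only [m6_0, m6_1, m6_2, m6_3, m6_4, m6_5, v6_0, v6_1, v6_2, v6_3, v6_4, v6_5] <;>
      omega

lemma card_shift (j : ℕ) :
    Nat.card {g : Fin 6 → ℕ // (∑ i, g i) + 3 = j} = (j + 2).choose 5 := by
  rcases le_or_gt 3 j with h | h
  · obtain ⟨m, rfl⟩ : ∃ m, j = m + 3 := ⟨j - 3, by omega⟩
    rw [Nat.card_congr (Equiv.subtypeEquivRight (q := fun g : Fin 6 → ℕ => ∑ i, g i = m)
      (fun g => by omega))]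
    rw [card_tuple m]
  · have : IsEmpty {g : Fin 6 → ℕ // (∑ i, g i) + 3 = j} := ⟨fun g => by omega⟩
    rw [Nat.card_of_isEmpty, Nat.choose_eq_zero_of_lt (by omega)]

lemma card_P (j : ℕ) :
    Nat.card {f : Fin 6 → ℕ // ∑ i, f i = j ∧ (f 0 = 0 ∨ f 1 = 0 ∨ f 2 = 0)} =
      (j + 5).choose 5 - (j + 2).choose 5 := by
  classical
  haveI fP : Finite {f : Fin 6 → ℕ // ∑ i, f i = j ∧ (f 0 = 0 ∨ f 1 = 0 ∨ f 2 = 0)} :=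
    Finite.of_equiv _ (Equiv.subtypeSubtypeEquivSubtypeInter
      (fun f : Fin 6 → ℕ => ∑ i, f i = j) (fun f => f 0 = 0 ∨ f 1 = 0 ∨ f 2 = 0))
  haveI fQ : Finite {f : Fin 6 → ℕ // ∑ i, f i = j ∧ ¬(f 0 = 0 ∨ f 1 = 0 ∨ f 2 = 0)} :=
    Finite.of_equiv _ (Equiv.subtypeSubtypeEquivSubtypeInter
      (fun f : Fin 6 → ℕ => ∑ i, f i = j) (fun f => ¬(f 0 = 0 ∨ f 1 = 0 ∨ f 2 = 0)))
  have key : Nat.card {f : Fin 6 → ℕ // ∑ i, f i = j ∧ (f 0 = 0 ∨ f 1 = 0 ∨ f 2 = 0)} +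
      Nat.card {f : Fin 6 → ℕ // ∑ i, f i = j ∧ ¬(f 0 = 0 ∨ f 1 = 0 ∨ f 2 = 0)} =
      Nat.card {f : Fin 6 → ℕ // ∑ i, f i = j} := by
    rw [← Nat.card_sum]
    refine Nat.card_congr (Equiv.trans (Equiv.sumCongr
      (Equiv.subtypeSubtypeEquivSubtypeInter (fun f : Fin 6 → ℕ => ∑ i, f i = j)
        (fun f => f 0 = 0 ∨ f 1 = 0 ∨ f 2 = 0)).symm
      (Equiv.subtypeSubtypeEquivSubtypeInter (fun f : Fin 6 → ℕ => ∑ i, f i = j)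
        (fun f => ¬(f 0 = 0 ∨ f 1 = 0 ∨ f 2 = 0))).symm)
      (Equiv.sumCompl fun x : {f : Fin 6 → ℕ // ∑ i, f i = j} =>
        x.1 0 = 0 ∨ x.1 1 = 0 ∨ x.1 2 = 0))
  have h2 : Nat.card {f : Fin 6 → ℕ // ∑ i, f i = j ∧ ¬(f 0 = 0 ∨ f 1 = 0 ∨ f 2 = 0)} =
      (j + 2).choose 5 := (Nat.card_congr (shiftEquiv j)).trans (card_shift j)
  rw [h2, card_tuple j] at key
  exact Nat.eq_sub_of_add_eq key

lemma H3_eq (j : ℕ) : H 3 j = (j + 5).choose 5 - (j + 2).choose 5 := by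
  rw [H, Nat.card_congr (magicEquiv j), card_P]

lemma H3_cast (j : ℕ) : (H 3 j : ℤ) = ((j + 5).choose 5 : ℤ) - ((j + 2).choose 5 : ℤ) := by
  rw [H3_eq, Nat.cast_sub (Nat.choose_le_choose 5 (by omega))]

open PowerSeries in
theorem H_three_genfun :
    (PowerSeries.mk fun j => (H 3 j : ℤ)) * (1 - PowerSeries.X) ^ 5 =
      1 + PowerSeries.X + PowerSeries.X ^ 2 := by
  have h6 : (mk fun n => ((5 + n).choose 5 : ℤ)) * (1 - X) ^ 6 = 1 := by
    exact_mod_cast PowerSeries.mk_add_choose_mul_one_sub_pow_eq_one ℤ 5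
  have hdecomp : (PowerSeries.mk fun j => (H 3 j : ℤ)) =
      (mk fun n => ((5 + n).choose 5 : ℤ)) -
        (mk fun n => ((5 + n).choose 5 : ℤ)) * X ^ 3 := by
    ext n
    rw [map_sub, coeff_mk, PowerSeries.coeff_mul_X_pow', coeff_mk, H3_cast]
    split_ifs with h
    · rw [coeff_mk, show 5 + (n - 3) = n + 2 by omega, show 5 + n = n + 5 by omega]
    · rw [show (((n + 2).choose 5 : ℕ) : ℤ) = 0 by
        rw [Nat.choose_eq_zero_of_lt (by omega)]; rfl,
        show 5 + n = n + 5 by omega]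
  have hX : (1 - X : ℤ⟦X⟧) ≠ 0 := by
    intro h
    have := congrArg (PowerSeries.constantCoeff : ℤ⟦X⟧ →+* ℤ) h
    simp at this
  apply mul_right_cancel₀ hX
  rw [hdecomp]
  linear_combination (1 - X ^ 3 : ℤ⟦X⟧) * h6
end

section
/- For every nonnegative integer l, the number of 2×2 nonnegative integer matrices with both row sums and both column sums at most l equals (1/6)(l+1)(l+2)(l^2+3l+3); equivalently, 6·G_2(l) = (l+1)(l+2)(l^2+3l+3). -/
/-!
Write a 2 × 2 matrix by its rows `(a, b)` and `(c, d)`; each lies in the triangle `{x + y ≤ l}`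
of `T(l + 1) = (l + 1)(l + 2)/2` lattice points. For a fixed first row, the column conditions
`a + c ≤ l`, `b + d ≤ l` cut two corner triangles with `T(a)` and `T(b)` points out of the
triangle of second rows; they are disjoint since `a + b ≤ l`. Summing `T(l + 1) - T(a) - T(b)`
over the first rows needs only `∑ a (a + 1) = l (l + 1) (l + 2) (l + 3) / 12` over the triangle.
-/

/-- `G k l`: the number of `k × k` matrices with nonnegative integer entries
such that every row sum and every column sum is at most `l`. -/
noncomputable def G (k l : ℕ) : ℕ :=
  Nat.card {A : Matrix (Fin k) (Fin k) ℕ //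
    (∀ i, ∑ j', A i j' ≤ l) ∧ (∀ j', ∑ i, A i j' ≤ l)}

open Finset

def triangle (n : ℕ) : Finset (ℕ × ℕ) :=
  {p ∈ range n ×ˢ range n | p.1 + p.2 < n}

@[simp]
theorem mem_triangle {n : ℕ} {p : ℕ × ℕ} : p ∈ triangle n ↔ p.1 + p.2 < n := by
  simp only [triangle, mem_filter, mem_product, mem_range]
  omega

theorem triangle_succ (n : ℕ) :
    triangle (n + 1) = (triangle n).disjUnion (antidiagonal n)
      (disjoint_left.2 fun p hp hp' => by simp_all) := by
  ext p
  simp only [mem_triangle, mem_disjUnion, HasAntidiagonal.mem_antidiagonal]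
  omega

theorem two_mul_card_triangle (n : ℕ) : 2 * #(triangle n) = n * (n + 1) := by
  induction n with
  | zero => rfl
  | succ n ih =>
    rw [triangle_succ, card_disjUnion, Nat.card_antidiagonal]
    linarith

theorem sum_range_mul_succ (n : ℕ) :
    3 * ∑ k ∈ range (n + 1), k * (k + 1) = n * (n + 1) * (n + 2) := by
  induction n with
  | zero => rfl
  | succ n ih =>
    rw [sum_range_succ]
    linear_combination ih

theorem sum_triangle_fst_mul_succ (n : ℕ) :
    12 * ∑ p ∈ triangle (n + 1), p.1 * (p.1 + 1) = n * (n + 1) * (n + 2) * (n + 3) := by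
  induction n with
  | zero => rfl
  | succ n ih =>
    rw [triangle_succ, sum_disjUnion,
      Nat.sum_antidiagonal_eq_sum_range_succ (fun i _ => i * (i + 1))]
    linear_combination ih + 4 * sum_range_mul_succ (n + 1)

theorem sum_triangle_swap {M : Type*} [AddCommMonoid M] (n : ℕ) (f : ℕ × ℕ → M) :
    ∑ p ∈ triangle n, f p.swap = ∑ p ∈ triangle n, f p :=
  sum_nbij' Prod.swap Prod.swap (by simp [add_comm]) (by simp [add_comm]) (by simp) (by simp)
    (by simp)

theorem card_triangle_filter_le_add_fst {n a : ℕ} (ha : a ≤ n) :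
    #{p ∈ triangle n | n ≤ a + p.1} = #(triangle a) := by
  refine card_nbij' (fun p => (p.1 - (n - a), p.2)) (fun p => (p.1 + (n - a), p.2))
    ?_ ?_ ?_ ?_ <;>
    intro p hp <;> simp [Prod.ext_iff] at hp ⊢ <;> omega

theorem card_triangle_filter_le_add_snd {n b : ℕ} (hb : b ≤ n) :
    #{p ∈ triangle n | n ≤ b + p.2} = #(triangle b) := by
  refine card_nbij' (fun p => (p.1, p.2 - (n - b))) (fun p => (p.1, p.2 + (n - b)))
    ?_ ?_ ?_ ?_ <;>
    intro p hp <;> simp [Prod.ext_iff] at hp ⊢ <;> omega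

theorem two_mul_card_triangle_filter_add {n a b : ℕ} (hab : a + b < n) :
    2 * #{p ∈ triangle n | a + p.1 < n ∧ b + p.2 < n} + a * (a + 1) + b * (b + 1) =
      n * (n + 1) := by
  have hsplit : #{p ∈ triangle n | a + p.1 < n ∧ b + p.2 < n} +
      (#{p ∈ triangle n | n ≤ a + p.1} + #{p ∈ triangle n | n ≤ b + p.2}) =
        #(triangle n) := by
    have hdisj : Disjoint {p ∈ triangle n | n ≤ a + p.1} {p ∈ triangle n | n ≤ b + p.2} :=
      disjoint_filter.2 fun p hp h₁ h₂ => by rw [mem_triangle] at hp; omega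
    rw [← card_union_of_disjoint hdisj, ← filter_or,
      ← card_filter_add_card_filter_not (s := triangle n) (fun p => a + p.1 < n ∧ b + p.2 < n)]
    congr 2
    exact filter_congr fun p _ => by omega
  linear_combination 2 * hsplit + two_mul_card_triangle n
    - 2 * card_triangle_filter_le_add_fst (n := n) (a := a) (by omega) - two_mul_card_triangle a
    - 2 * card_triangle_filter_le_add_snd (n := n) (b := b) (by omega) - two_mul_card_triangle b

theorem G_two_eq_card (l : ℕ) :
    G 2 l = #{x ∈ triangle (l + 1) ×ˢ triangle (l + 1) |
      x.1.1 + x.2.1 < l + 1 ∧ x.1.2 + x.2.2 < l + 1} := by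
  rw [G, ← Nat.card_eq_finsetCard]
  refine Nat.card_congr (Equiv.subtypeEquiv
    ((Matrix.of.symm.trans (Equiv.arrowCongr (Equiv.refl _) (finTwoArrowEquiv ℕ))).trans
      (finTwoArrowEquiv _)) fun A => ?_)
  simp [Fin.forall_fin_two, Fin.sum_univ_two]

theorem two_mul_G_two_add_sum (l : ℕ) :
    2 * G 2 l + ∑ x ∈ triangle (l + 1), (x.1 * (x.1 + 1) + x.2 * (x.2 + 1)) =
      #(triangle (l + 1)) * ((l + 1) * (l + 2)) := by
  rw [G_two_eq_card, card_filter, sum_product, mul_sum, ← sum_add_distrib, card_eq_sum_ones,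
    sum_mul]
  refine sum_congr rfl fun x hx => ?_
  rw [← card_filter, one_mul, ← two_mul_card_triangle_filter_add (mem_triangle.1 hx),
    add_assoc]

theorem G_two (l : ℕ) : 6 * G 2 l = (l + 1) * (l + 2) * (l ^ 2 + 3 * l + 3) := by
  have h := two_mul_G_two_add_sum l
  have hswap :
      ∑ p ∈ triangle (l + 1), p.2 * (p.2 + 1) = ∑ p ∈ triangle (l + 1), p.1 * (p.1 + 1) :=
    sum_triangle_swap (l + 1) fun p => p.1 * (p.1 + 1)
  rw [sum_add_distrib, hswap] at h
  have h4 : 4 * (6 * G 2 l) = 4 * ((l + 1) * (l + 2) * (l ^ 2 + 3 * l + 3)) := by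
    linear_combination 12 * h - 2 * sum_triangle_fst_mul_succ l
      + 6 * (l + 1) * (l + 2) * two_mul_card_triangle (l + 1)
  omega
end
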